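/- arXiv:0811.3738 — 2 statements merged into one kernel-verified Lean document; each statement's English description precedes it below -/
import Mathlib

section
/- Let H be a finite-dimensional semisimple Hopf algebra over an algebraically closed field of characteristic zero with Fourier transforms F_H : H → H*, F_H(a) = a ⇀ t_H, and F_K : K → K* for a Hopf subalgebra K. Then for all a ∈ K, the restriction of F_H(a) to K equals F_K(a); i.e., the diagram with the inclusion i : K → H and restriction i* : H* → K* commutes: i* ∘ F_H ∘ i = F_K. -/
open TensorProduct

noncomputable section

namespace Paper

set_option linter.unusedSectionVars false

variable (k : Type) [Field k]



section Conv

variable (H : Type) [AddCommGroup H] [Module k H] [Coalgebra k H]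

/-- Convolution product on the dual of a coalgebra. -/
def conv (f g : Module.Dual k H) : Module.Dual k H :=
  (LinearMap.mul' k k) ∘ₗ (TensorProduct.map f g) ∘ₗ (Coalgebra.comul (R := k))

end Conv

section Fourier

variable (H : Type) [Ring H] [Algebra k H]

/-- The Fourier transform associated to a functional `t`: `fourier t a = (b ↦ t (b * a))`. -/
def fourier (t : Module.Dual k H) : H →ₗ[k] Module.Dual k H where
  toFun a := t ∘ₗ LinearMap.mulRight k a
  map_add' a b := by ext x; simp [mul_add]
  map_smul' c a := by ext x; simp [mul_smul_comm]

end Fourier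

section Act

variable (H : Type) [Ring H] [HopfAlgebra k H]

/-- The bilinear map sending `p ⊗ q` to the operator `x ↦ p * x * q`. -/
def sandwich : H ⊗[k] H →ₗ[k] (H →ₗ[k] H) :=
  TensorProduct.lift
    { toFun := fun p =>
        { toFun := fun q => (LinearMap.mulLeft k p) ∘ₗ (LinearMap.mulRight k q)
          map_add' := fun q r => by ext x; simp [mul_add]
          map_smul' := fun c q => by ext x; simp [mul_smul_comm] }
      map_add' := fun p p' => by ext q x; simp [add_mul]
      map_smul' := fun c p => by ext q x; simp [smul_mul_assoc] }

/-- The (left) adjoint action of `H` on itself: `adAct a x = ∑ a₁ * x * S(a₂)`. -/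
def adAct : H →ₗ[k] (H →ₗ[k] H) :=
  (sandwich k H) ∘ₗ (LinearMap.lTensor H (HopfAlgebra.antipode (R := k))) ∘ₗ
    (Coalgebra.comul (R := k))

/-- The action of `a ∈ H` on `f ∈ H*` given by `(a · f)(x) = f(∑ S(a₂) x a₁)`
(the coadjoint action appearing in the `D(H)`-module `H*`; here `S = S⁻¹` since `S² = id`). -/
def coadAct (a : H) (f : Module.Dual k H) : Module.Dual k H :=
  f ∘ₗ (sandwich k H
    ((LinearMap.rTensor H (HopfAlgebra.antipode (R := k)))
      ((TensorProduct.comm k H H) (Coalgebra.comul (R := k) a))))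

/-- The action of `f ∈ H*` on `H` given by `f · h = ∑ f(S(h₁)) h₂` (with `S = S⁻¹`). -/
def dualAct (f : Module.Dual k H) : H →ₗ[k] H :=
  (TensorProduct.lid k H).toLinearMap ∘ₗ
    (LinearMap.rTensor H (f ∘ₗ HopfAlgebra.antipode (R := k))) ∘ₗ (Coalgebra.comul (R := k))

/-- The operator `a ↦ ∑ a₁ χ(S(a₂))` associated to a functional `χ`. -/
def chiOp (χ : Module.Dual k H) : H →ₗ[k] H :=
  (TensorProduct.rid k H).toLinearMap ∘ₗ
    (LinearMap.lTensor H (χ ∘ₗ HopfAlgebra.antipode (R := k))) ∘ₗ (Coalgebra.comul (R := k))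

/-- The map `v ↦ ∑ (S(v₃) * v₁) ⊗ v₂`. -/
def conormalMap : H →ₗ[k] H ⊗[k] H :=
  (TensorProduct.comm k H H).toLinearMap ∘ₗ
  (LinearMap.lTensor H (LinearMap.mul' k H)) ∘ₗ
  (TensorProduct.assoc k H H H).toLinearMap ∘ₗ
  (TensorProduct.comm k H (H ⊗[k] H)).toLinearMap ∘ₗ
  (LinearMap.lTensor H (LinearMap.lTensor H (HopfAlgebra.antipode (R := k)))) ∘ₗ
  (LinearMap.lTensor H (Coalgebra.comul (R := k))) ∘ₗ
  (Coalgebra.comul (R := k))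

/-- A subspace `I ⊆ H` is co-normal if `∑ S(v₃)v₁ ⊗ v₂ ∈ H ⊗ I` for every `v ∈ I`. -/
def IsConormal (I : Submodule k H) : Prop :=
  ∀ v ∈ I, conormalMap k H v ∈ LinearMap.range (LinearMap.lTensor H I.subtype)

/-- The adjoint action of `H*` on itself, written via the canonical identifications:
`(adDual f g)(x) = ∑ f(x₁ * S(x₃)) g(x₂)`, i.e. `adDual f g = ∑ f₁ * g * S(f₂)` in `H*`. -/
def adDual (f g : Module.Dual k H) : Module.Dual k H :=
  (LinearMap.mul' k k) ∘ₗ (TensorProduct.map f g) ∘ₗ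
  (LinearMap.rTensor H (LinearMap.mul' k H)) ∘ₗ
  (TensorProduct.assoc k H H H).symm.toLinearMap ∘ₗ
  (LinearMap.lTensor H (TensorProduct.comm k H H).toLinearMap) ∘ₗ
  (LinearMap.lTensor H (LinearMap.lTensor H (HopfAlgebra.antipode (R := k)))) ∘ₗ
  (LinearMap.lTensor H (Coalgebra.comul (R := k))) ∘ₗ
  (Coalgebra.comul (R := k))

end Act

section Char

variable (H : Type) [Ring H] [Algebra k H]

/-- The character of an `H`-module `M` (trace of the action). -/
def moduleChar (M : Type) [AddCommGroup M] [Module k M] [Module H M]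
    [IsScalarTower k H M] : Module.Dual k H :=
  (LinearMap.trace k M) ∘ₗ (Algebra.lsmul k k M : H →ₐ[k] Module.End k M).toLinearMap

/-- The character ring `C(H)` of `H`, as a subspace of `H*`: the span of characters of
finite-dimensional `H`-modules. -/
def charRing : Submodule k (Module.Dual k H) :=
  Submodule.span k {f | ∃ (M : Type) (_ : AddCommGroup M) (_ : Module k M) (_ : Module H M)
      (_ : IsScalarTower k H M) (_ : Module.Finite k M), f = moduleChar k H M}

/-- `f` is an irreducible character of `H`. -/
def IsIrrChar (f : Module.Dual k H) : Prop :=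
  ∃ (M : Type) (_ : AddCommGroup M) (_ : Module k M) (_ : Module H M)
      (_ : IsScalarTower k H M), Module.Finite k M ∧ IsSimpleModule H M ∧ f = moduleChar k H M

end Char




section Ind

variable (K H : Type) [Ring K] [Ring H] [HopfAlgebra k K] [HopfAlgebra k H]
variable (i : K →ₐc[k] H)
variable (V : Type) [AddCommGroup V] [Module k V] [Module K V] [IsScalarTower k K V]

/-- The subspace of `H ⊗ V` by which one quotients to obtain the induced module `H ⊗_K V`. -/
def indRel : Submodule k (H ⊗[k] V) :=
  Submodule.span k {z | ∃ (h : H) (x : K) (v : V), z = (h * i x) ⊗ₜ[k] v - h ⊗ₜ[k] (x • v)}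

/-- The induced module `H ⊗_K V`. -/
abbrev IndMod := (H ⊗[k] V) ⧸ indRel k K H i V

lemma indRel_mapsTo (h' : H) :
    (indRel k K H i V).map ((LinearMap.mulLeft k h').rTensor V) ≤ indRel k K H i V := by
  rw [indRel, Submodule.map_span]
  refine Submodule.span_le.2 ?_
  rintro _ ⟨_, ⟨h, x, v, rfl⟩, rfl⟩
  refine Submodule.subset_span ⟨h' * h, x, v, ?_⟩
  simp [mul_assoc]

/-- Left multiplication by `h' : H` on the induced module. -/
def indSmul (h' : H) : IndMod k K H i V →ₗ[k] IndMod k K H i V :=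
  Submodule.mapQ _ _ ((LinearMap.mulLeft k h').rTensor V)
    (Submodule.map_le_iff_le_comap.mp (indRel_mapsTo k K H i V h'))

lemma indSmul_mk (h' h : H) (v : V) :
    indSmul k K H i V h' (Submodule.Quotient.mk (h ⊗ₜ[k] v)) =
      Submodule.Quotient.mk ((h' * h) ⊗ₜ[k] v) := rfl

/-- The algebra map `H → End (IndMod)` defining the `H`-module structure on the
induced module. -/
def indActHom : H →ₐ[k] Module.End k (IndMod k K H i V) where
  toFun h' := indSmul k K H i V h'
  map_one' := by
    refine Submodule.linearMap_qext _ ?_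
    ext h v
    simp only [LinearMap.coe_comp, Function.comp_apply, AlgebraTensorModule.curry_apply,
      curry_apply, LinearMap.coe_restrictScalars, Submodule.mkQ_apply, indSmul_mk, one_mul,
      Module.End.one_apply]
  map_mul' a b := by
    refine Submodule.linearMap_qext _ ?_
    ext h v
    simp only [LinearMap.coe_comp, Function.comp_apply, AlgebraTensorModule.curry_apply,
      curry_apply, LinearMap.coe_restrictScalars, Submodule.mkQ_apply, indSmul_mk,
      Module.End.mul_apply, mul_assoc]
  map_zero' := by
    refine Submodule.linearMap_qext _ ?_
    ext h v
    simp only [LinearMap.coe_comp, Function.comp_apply, AlgebraTensorModule.curry_apply,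
      curry_apply, LinearMap.coe_restrictScalars, Submodule.mkQ_apply, indSmul_mk, zero_mul,
      LinearMap.zero_apply]
    rw [zero_tmul]
    exact Submodule.Quotient.mk_eq_zero _ |>.2 (Submodule.zero_mem _)
  map_add' a b := by
    refine Submodule.linearMap_qext _ ?_
    ext h v
    simp only [LinearMap.coe_comp, Function.comp_apply, AlgebraTensorModule.curry_apply,
      curry_apply, LinearMap.coe_restrictScalars, Submodule.mkQ_apply, indSmul_mk,
      LinearMap.add_apply, add_mul, add_tmul]
    rw [Submodule.Quotient.mk_add]
  commutes' c := by
    refine Submodule.linearMap_qext _ ?_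
    ext h v
    simp only [LinearMap.coe_comp, Function.comp_apply, AlgebraTensorModule.curry_apply,
      curry_apply, LinearMap.coe_restrictScalars, Submodule.mkQ_apply, indSmul_mk,
      Module.algebraMap_end_apply]
    rw [← Submodule.Quotient.mk_smul, smul_tmul', Algebra.smul_def]

instance : Module H (IndMod k K H i V) :=
  Module.compHom _ (indActHom k K H i V).toRingHom

instance : IsScalarTower k H (IndMod k K H i V) where
  smul_assoc c h z := by
    change indActHom k K H i V (c • h) z = c • (indActHom k K H i V h z)
    rw [map_smul]
    rfl

instance [Module.Finite k H] [Module.Finite k V] : Module.Finite k (IndMod k K H i V) :=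
  Module.Finite.of_surjective (indRel k K H i V).mkQ (Submodule.Quotient.mk_surjective _)

end Ind




section Subcoalg

variable (H : Type) [AddCommGroup H] [Module k H] [Coalgebra k H]

/-- `C` is a subcoalgebra of `H` if `Δ(C) ⊆ C ⊗ C`. -/
def IsSubcoalgebra (C : Submodule k H) : Prop :=
  ∀ x ∈ C, Coalgebra.comul (R := k) x ∈
    LinearMap.range (TensorProduct.map C.subtype C.subtype)

/-- A simple (nonzero, minimal) subcoalgebra. -/
def IsSimpleSubcoalgebra (C : Submodule k H) : Prop :=
  IsSubcoalgebra k H C ∧ C ≠ ⊥ ∧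
    ∀ D : Submodule k H, D ≤ C → IsSubcoalgebra k H D → D = ⊥ ∨ D = C

/-- The coaction `C → H ⊗ C` of a subcoalgebra, obtained by corestricting `Δ`. -/
def coact (C : Submodule k H) (hC : IsSubcoalgebra k H C) : C →ₗ[k] H ⊗[k] C :=
  ((LinearEquiv.ofInjective (LinearMap.lTensor H C.subtype)
      (Module.Flat.lTensor_preserves_injective_linearMap C.subtype C.injective_subtype)).symm :
        LinearMap.range (LinearMap.lTensor H C.subtype) ≃ₗ[k] H ⊗[k] C) ∘ₗ
    (LinearMap.codRestrict (LinearMap.range (LinearMap.lTensor H C.subtype))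
      ((Coalgebra.comul (R := k)) ∘ₗ C.subtype)
      (fun x => by
        obtain ⟨y, hy⟩ := hC x x.2
        exact ⟨(LinearMap.rTensor C C.subtype) y, by
          rw [← LinearMap.comp_apply, LinearMap.lTensor_comp_rTensor, hy]; rfl⟩))

variable [FiniteDimensional k H]

/-- The character `d_C ∈ H` of a finite-dimensional subcoalgebra `C ⊆ H`, viewed as a left
`H`-comodule; in the notation of the paper, `d_C = ∑_{d ∈ Irr(C)} ε(d) d`. -/
def dC (C : Submodule k H) (hC : IsSubcoalgebra k H C) : H :=
  (TensorProduct.rid k H)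
    ((LinearMap.lTensor H (contractRight k C))
      ((TensorProduct.assoc k H C (Module.Dual k C))
        ((LinearMap.rTensor (Module.Dual k C) (coact k H C hC))
          (coevaluation k C 1))))

end Subcoalg

section TensorMod

variable (H : Type) [Ring H] [HopfAlgebra k H]
variable (M N : Type) [AddCommGroup M] [Module k M] [Module H M] [IsScalarTower k H M]
variable [AddCommGroup N] [Module k N] [Module H N] [IsScalarTower k H N]

/-- The representation of `H` on `M ⊗ N` via comultiplication. -/
def tensorRep : H →ₐ[k] Module.End k (M ⊗[k] N) :=
  (Module.endTensorEndAlgHom (R := k) (S := k) (A := k) (M := M) (N := N)).comp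
    ((Algebra.TensorProduct.map
        (Algebra.lsmul k k M : H →ₐ[k] Module.End k M)
        (Algebra.lsmul k k N : H →ₐ[k] Module.End k N)).comp
      (Bialgebra.comulAlgHom k H))

end TensorMod

/-- The tensor product of two `H`-modules, with the diagonal `H`-action. -/
def TensorMod (k : Type) [Field k] (H : Type) [Ring H] [HopfAlgebra k H]
    (M N : Type) [AddCommGroup M] [Module k M] [Module H M] [IsScalarTower k H M]
    [AddCommGroup N] [Module k N] [Module H N] [IsScalarTower k H N] : Type := M ⊗[k] N

section TensorMod2

variable (H : Type) [Ring H] [HopfAlgebra k H]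
variable (M N : Type) [AddCommGroup M] [Module k M] [Module H M] [IsScalarTower k H M]
variable [AddCommGroup N] [Module k N] [Module H N] [IsScalarTower k H N]

instance : AddCommGroup (TensorMod k H M N) := inferInstanceAs (AddCommGroup (M ⊗[k] N))
instance : Module k (TensorMod k H M N) := inferInstanceAs (Module k (M ⊗[k] N))

instance : Module H (TensorMod k H M N) :=
  Module.compHom (M ⊗[k] N) (tensorRep k H M N).toRingHom

instance : IsScalarTower k H (TensorMod k H M N) where
  smul_assoc c h z := by
    change tensorRep k H M N (c • h) z = c • (tensorRep k H M N h z)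
    rw [map_smul]
    rfl

instance [Module.Finite k M] [Module.Finite k N] : Module.Finite k (TensorMod k H M N) :=
  inferInstanceAs (Module.Finite k (M ⊗[k] N))

end TensorMod2

/-- The restriction of an `H`-module to `K` along `i`. -/
def ResMod (k : Type) [Field k] (K H : Type) [Ring K] [Ring H] [HopfAlgebra k K]
    [HopfAlgebra k H] (i : K →ₐc[k] H) (M : Type) [AddCommGroup M] [Module k M]
    [Module H M] [IsScalarTower k H M] : Type := M

section ResMod2

variable (K H : Type) [Ring K] [Ring H] [HopfAlgebra k K] [HopfAlgebra k H]
variable (i : K →ₐc[k] H)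
variable (M : Type) [AddCommGroup M] [Module k M] [Module H M] [IsScalarTower k H M]

instance : AddCommGroup (ResMod k K H i M) := inferInstanceAs (AddCommGroup M)
instance : Module k (ResMod k K H i M) := inferInstanceAs (Module k M)

instance : Module K (ResMod k K H i M) :=
  Module.compHom M ((i : K →ₐ[k] H) : K →+* H)

instance : IsScalarTower k K (ResMod k K H i M) where
  smul_assoc c x m := by
    have h : ((i : K →ₐ[k] H) (c • x)) • (id m : M) =
        c • (((i : K →ₐ[k] H) x) • (id m : M)) := by
      rw [map_smul, smul_assoc]
    exact h

instance [Module.Finite k M] : Module.Finite k (ResMod k K H i M) :=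
  inferInstanceAs (Module.Finite k M)

end ResMod2

section Restriction

variable {k}

theorem conv_comp_coalgHom {C D : Type} [AddCommGroup C] [Module k C] [Coalgebra k C]
    [AddCommGroup D] [Module k D] [Coalgebra k D] (i : C →ₗc[k] D) (p q : Module.Dual k D) :
    conv k C (p ∘ₗ i.toLinearMap) (q ∘ₗ i.toLinearMap) = conv k D p q ∘ₗ i.toLinearMap := by
  simp only [conv, TensorProduct.map_comp, LinearMap.comp_assoc]
  rw [i.map_comp_comul]

theorem fourier_comp_algHom {K H : Type} [Ring K] [Algebra k K] [Ring H] [Algebra k H]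
    (i : K →ₐ[k] H) (t : Module.Dual k H) (a : K) :
    fourier k H t (i a) ∘ₗ i.toLinearMap = fourier k K (t ∘ₗ i.toLinearMap) a := by
  ext x
  exact congrArg t (map_mul i x a).symm

/-- Evaluate `(tH ∘ i) * tK` once by the integral property of `tK`, and once by that of `tH`
after extending `tK` to `H` along the injection `i`. -/
theorem integral_comp_bialgHom {K H : Type} [Ring K] [Bialgebra k K] [Ring H] [Bialgebra k H]
    (i : K →ₐc[k] H) (hi : Function.Injective i)
    {tH : Module.Dual k H} (htH : ∀ f : Module.Dual k H, conv k H tH f = f 1 • tH)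
    {tK : Module.Dual k K} (htK : ∀ f : Module.Dual k K, conv k K f tK = f 1 • tK) :
    tH 1 • tK = tK 1 • (tH ∘ₗ i.toLinearMap) := by
  obtain ⟨r, hr⟩ := i.toLinearMap.exists_leftInverse_of_injective (LinearMap.ker_eq_bot.2 hi)
  have hextend : (tK ∘ₗ r) ∘ₗ i.toLinearMap = tK := by
    rw [LinearMap.comp_assoc, hr, LinearMap.comp_id]
  calc tH 1 • tK = conv k K (tH ∘ₗ i.toLinearMap) tK := by
        rw [htK, LinearMap.comp_apply]
        exact congrArg (fun c => tH c • tK) (map_one i).symm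
    _ = conv k H tH (tK ∘ₗ r) ∘ₗ i.toLinearMap := by
        rw [← conv_comp_coalgHom, hextend]
    _ = tK 1 • (tH ∘ₗ i.toLinearMap) := by
        rw [htH, LinearMap.smul_comp]
        congr 1
        exact (congrArg (tK ∘ₗ r) (map_one i)).symm.trans (LinearMap.congr_fun hextend 1)

end Restriction

theorem fourier_restriction_commutes_general
    (k : Type) [Field k]
    (H : Type) [Ring H] [HopfAlgebra k H]
    (K : Type) [Ring K] [HopfAlgebra k K]
    (i : K →ₐc[k] H) (hi : Function.Injective i)
    (tH : Module.Dual k H)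
    (htH : ∀ f : Module.Dual k H, conv k H f tH = f 1 • tH ∧ conv k H tH f = f 1 • tH)
    (htH1 : tH 1 = 1)
    (tK : Module.Dual k K)
    (htK : ∀ f : Module.Dual k K, conv k K f tK = f 1 • tK ∧ conv k K tK f = f 1 • tK)
    (htK1 : tK 1 = 1)
    :
    ∀ a : K, (fourier k H tH (i a)) ∘ₗ i.toLinearMap = fourier k K tK a := by
  have hrestrict : tH ∘ₗ i.toLinearMap = tK := by
    simpa only [htH1, htK1, one_smul] using
      (integral_comp_bialgHom i hi (fun f => (htH f).2) (fun f => (htK f).1)).symm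
  intro a
  rw [← hrestrict]
  exact fourier_comp_algHom (i : K →ₐ[k] H) tH a

/-- the diagram `i* ∘ F_H ∘ i = F_K` commutes. -/
theorem fourier_restriction_commutes
    (k : Type) [Field k] [IsAlgClosed k] [CharZero k]
    (H : Type) [Ring H] [HopfAlgebra k H] [FiniteDimensional k H] [IsSemisimpleRing H]
    (K : Type) [Ring K] [HopfAlgebra k K] [FiniteDimensional k K] [IsSemisimpleRing K]
    (i : K →ₐc[k] H) (hi : Function.Injective i)
    (tH : Module.Dual k H)
    (htH : ∀ f : Module.Dual k H, conv k H f tH = f 1 • tH ∧ conv k H tH f = f 1 • tH)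
    (htH1 : tH 1 = 1)
    (tK : Module.Dual k K)
    (htK : ∀ f : Module.Dual k K, conv k K f tK = f 1 • tK ∧ conv k K tK f = f 1 • tK)
    (htK1 : tK 1 = 1)
    :
    ∀ a : K, (fourier k H tH (i a)) ∘ₗ i.toLinearMap = fourier k K tK a :=
  fourier_restriction_commutes_general k H K i hi tH htH htH1 tK htK htK1

end Paper
end
end

section
/- Let H be a finite-dimensional semisimple Hopf algebra over an algebraically closed field of characteristic zero and D(H) its Drinfeld double. Regard H* as a D(H)-module via (a·f)(x) = f(S^{-1}(a_2) x a_1) for a ∈ H and g·f = gf for g ∈ H*, and regard H as a D(H)-module via a·h = a_1 h S(a_2) and f·h = f(S^{-1}(h_1)) h_2. Then the Fourier transform F : H → H*, F(h) = h ⇀ t_H, is an isomorphism of D(H)-modules. -/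
open TensorProduct

noncomputable section

namespace Paper

set_option linter.unusedSectionVars false

variable (k : Type) [Field k]



/-!
Semisimplicity provides a two-sided integral `Λ ∈ H` with `ε(Λ) = 1`. Since `t` is a left and a
right integral, `1 ⊗ x = ∑ (S(x₁) ⊗ 1) Δ(x₂)` and `x ⊗ 1 = ∑ Δ(x₁) (1 ⊗ S(x₂))` give
`∑ t(x y₂) y₁ = ∑ t(x₂ y) S(x₁)` and `∑ t(x₁ y) x₂ = ∑ t(x y₁) S(y₂)`; for `y = Λ`, resp. `x = Λ`,
these become `∑ t(x Λ₂) Λ₁ = t(Λ) S(x)` and `∑ t(Λ₁ y) Λ₂ = t(Λ) S(y)`. Taking the trace of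
`y ↦ ∑ t(Λ₁ y) S(Λ₂) = t(Λ) y` gives `t(Λ) · dim H = t(1) = 1`, so `t(Λ) ≠ 0` and the form
`(x, y) ↦ t(x y)` is nondegenerate: `F` is bijective. Pairing the two formulas for `Λ` against `t`
gives `t(S(x) y) = t(x S(y))`, hence `t ∘ S = t` and `t(x y) = t(y x)`, which is the compatibility
of `F` with the actions of `H`. The compatibility with the actions of `H*` is the first identity
above with `S` applied to it.
-/

open Coalgebra HopfAlgebra

section Integrals

variable {k : Type} [Field k] {H : Type} [Ring H] [HopfAlgebra k H] {ι κ : Type}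
variable {t : Module.Dual k H} {Λ : H}

local notation "S" => HopfAlgebra.antipode k (A := H)
local notation "ε" => Coalgebra.counit (R := k) (A := H)
local notation "Δ" => Coalgebra.comul (R := k) (A := H)

lemma sum_counit_smul_left {x : H} (r : Repr k x ι) :
    ∑ i ∈ r.index, ε (r.right i) • r.left i = x := by
  simpa only [map_sum, TensorProduct.rid_tmul, one_smul] using
    congrArg (TensorProduct.rid k H) (sum_tmul_counit_eq (R := k) r)

lemma sum_antipode_tmul_one_mul_comul {x : H} (r : Repr k x ι) :
    ∑ i ∈ r.index, (S (r.left i) ⊗ₜ[k] (1 : H)) * Δ (r.right i) = (1 : H) ⊗ₜ[k] x := by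
  let L : H ⊗[k] (H ⊗[k] H) →ₗ[k] H ⊗[k] H :=
    TensorProduct.map (LinearMap.mul' k H ∘ₗ (S).rTensor H) LinearMap.id ∘ₗ
      (TensorProduct.assoc k H H H).symm.toLinearMap
  have hL : ∀ a b c : H, L (a ⊗ₜ (b ⊗ₜ c)) = (S a * b) ⊗ₜ c := fun _ _ _ => rfl
  have coassoc := congrArg L
    (sum_tmul_tmul_eq r (fun i => ℛ k (r.left i)) (fun i => ℛ k (r.right i)))
  simp only [map_sum, hL] at coassoc
  calc _ = ∑ i ∈ r.index, ∑ j ∈ (ℛ k (r.right i)).index,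
        (S (r.left i) * (ℛ k (r.right i)).left j) ⊗ₜ[k] (ℛ k (r.right i)).right j := by
        refine Finset.sum_congr rfl fun i _ => ?_
        rw [← (ℛ k (r.right i)).eq, Finset.mul_sum]
        simp only [Algebra.TensorProduct.tmul_mul_tmul, one_mul]
    _ = ∑ i ∈ r.index, ε (r.left i) • ((1 : H) ⊗ₜ[k] r.right i) := by
        rw [← coassoc]
        refine Finset.sum_congr rfl fun i _ => ?_
        rw [← TensorProduct.sum_tmul, sum_antipode_mul_eq_smul, TensorProduct.smul_tmul']
    _ = (1 : H) ⊗ₜ[k] x := by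
        simp_rw [← TensorProduct.tmul_smul, ← TensorProduct.tmul_sum, sum_counit_smul]

lemma sum_comul_mul_one_tmul_antipode {x : H} (r : Repr k x ι) :
    ∑ i ∈ r.index, Δ (r.left i) * ((1 : H) ⊗ₜ[k] S (r.right i)) = x ⊗ₜ[k] (1 : H) := by
  let L : H ⊗[k] (H ⊗[k] H) →ₗ[k] H ⊗[k] H :=
    (LinearMap.mul' k H ∘ₗ (S).lTensor H).lTensor H
  have hL : ∀ a b c : H, L (a ⊗ₜ (b ⊗ₜ c)) = a ⊗ₜ (b * S c) := fun _ _ _ => rfl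
  have coassoc := congrArg L
    (sum_tmul_tmul_eq r (fun i => ℛ k (r.left i)) (fun i => ℛ k (r.right i)))
  simp only [map_sum, hL] at coassoc
  calc _ = ∑ i ∈ r.index, ∑ j ∈ (ℛ k (r.left i)).index,
        (ℛ k (r.left i)).left j ⊗ₜ[k] ((ℛ k (r.left i)).right j * S (r.right i)) := by
        refine Finset.sum_congr rfl fun i _ => ?_
        rw [← (ℛ k (r.left i)).eq, Finset.sum_mul]
        simp only [Algebra.TensorProduct.tmul_mul_tmul, mul_one]
    _ = ∑ i ∈ r.index, ε (r.right i) • (r.left i ⊗ₜ[k] (1 : H)) := by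
        rw [coassoc]
        refine Finset.sum_congr rfl fun i _ => ?_
        rw [← TensorProduct.tmul_sum, sum_mul_antipode_eq_smul, TensorProduct.tmul_smul]
    _ = x ⊗ₜ[k] (1 : H) := by
        conv_rhs => rw [← sum_counit_smul_left r, TensorProduct.sum_tmul]
        simp_rw [TensorProduct.smul_tmul']

def IsLeftIntegral (t : Module.Dual k H) : Prop :=
  ∀ f : Module.Dual k H, conv k H f t = f 1 • t

def IsRightIntegral (t : Module.Dual k H) : Prop :=
  ∀ f : Module.Dual k H, conv k H t f = f 1 • t

lemma conv_apply_eq_sum (f g : Module.Dual k H) {x : H} (r : Repr k x ι) :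
    conv k H f g x = ∑ i ∈ r.index, f (r.left i) * g (r.right i) := by
  rw [conv, LinearMap.comp_apply, LinearMap.comp_apply, ← r.eq, map_sum, map_sum]
  rfl

lemma eq_of_forall_dual_apply_eq {v w : H} (h : ∀ φ : Module.Dual k H, φ v = φ w) : v = w :=
  sub_eq_zero.mp <| (Module.forall_dual_apply_eq_zero_iff k (v - w)).mp fun φ => by
    rw [map_sub, h φ, sub_self]

lemma IsLeftIntegral.rid_lTensor_comul (ht : IsLeftIntegral t) (x : H) :
    TensorProduct.rid k H (t.lTensor H (Δ x)) = t x • (1 : H) := by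
  refine eq_of_forall_dual_apply_eq (k := k) fun φ => ?_
  have hφ := conv_apply_eq_sum φ t (ℛ k x)
  rw [ht φ] at hφ
  rw [← (ℛ k x).eq, map_sum, map_sum, map_sum, map_smul, smul_eq_mul, mul_comm, ← smul_eq_mul,
    ← LinearMap.smul_apply, hφ]
  refine Finset.sum_congr rfl fun i _ => ?_
  simp [mul_comm]

lemma IsRightIntegral.lid_rTensor_comul (ht : IsRightIntegral t) (x : H) :
    TensorProduct.lid k H (t.rTensor H (Δ x)) = t x • (1 : H) := by
  refine eq_of_forall_dual_apply_eq (k := k) fun φ => ?_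
  have hφ := conv_apply_eq_sum t φ (ℛ k x)
  rw [ht φ] at hφ
  rw [← (ℛ k x).eq, map_sum, map_sum, map_sum, map_smul, smul_eq_mul, mul_comm, ← smul_eq_mul,
    ← LinearMap.smul_apply, hφ]
  refine Finset.sum_congr rfl fun i _ => ?_
  simp

lemma IsLeftIntegral.sum_smul_eq_sum_smul_antipode (ht : IsLeftIntegral t) {x y : H}
    (rx : Repr k x ι) (ry : Repr k y κ) :
    ∑ j ∈ ry.index, t (x * ry.right j) • ry.left j =
      ∑ i ∈ rx.index, t (rx.right i * y) • S (rx.left i) := by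
  let T : H ⊗[k] H →ₗ[k] H := (TensorProduct.rid k H).toLinearMap ∘ₗ t.lTensor H
  have hT : ∀ a b : H, T (a ⊗ₜ b) = t b • a := fun _ _ => rfl
  have hT_mul : ∀ (a : H) (w : H ⊗[k] H), T ((a ⊗ₜ 1) * w) = a * T w := by
    intro a w
    induction w using TensorProduct.induction_on with
    | zero => simp
    | tmul b c => simp only [Algebra.TensorProduct.tmul_mul_tmul, one_mul, hT, mul_smul_comm]
    | add w w' hw hw' => rw [mul_add, map_add, hw, hw', map_add, mul_add]
  have key : ((1 : H) ⊗ₜ[k] x) * Δ y =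
      ∑ i ∈ rx.index, (S (rx.left i) ⊗ₜ[k] (1 : H)) * Δ (rx.right i * y) := by
    rw [← sum_antipode_tmul_one_mul_comul rx, Finset.sum_mul]
    simp_rw [Bialgebra.comul_mul, mul_assoc]
  have hkey := congrArg T key
  rw [← ry.eq, Finset.mul_sum, map_sum, map_sum] at hkey
  simp only [Algebra.TensorProduct.tmul_mul_tmul, one_mul, hT, hT_mul] at hkey
  rw [hkey]
  refine Finset.sum_congr rfl fun i _ => ?_
  rw [show T (Δ (rx.right i * y)) = _ from ht.rid_lTensor_comul _, mul_smul_comm, mul_one]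

lemma IsRightIntegral.sum_smul_eq_sum_smul_antipode (ht : IsRightIntegral t) {x y : H}
    (rx : Repr k x ι) (ry : Repr k y κ) :
    ∑ i ∈ rx.index, t (rx.left i * y) • rx.right i =
      ∑ j ∈ ry.index, t (x * ry.left j) • S (ry.right j) := by
  let T : H ⊗[k] H →ₗ[k] H := (TensorProduct.lid k H).toLinearMap ∘ₗ t.rTensor H
  have hT : ∀ a b : H, T (a ⊗ₜ b) = t a • b := fun _ _ => rfl
  have hT_mul : ∀ (a : H) (w : H ⊗[k] H), T (w * (1 ⊗ₜ a)) = T w * a := by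
    intro a w
    induction w using TensorProduct.induction_on with
    | zero => simp
    | tmul b c => simp only [Algebra.TensorProduct.tmul_mul_tmul, mul_one, hT, smul_mul_assoc]
    | add w w' hw hw' => rw [add_mul, map_add, hw, hw', map_add, add_mul]
  have key : Δ x * (y ⊗ₜ[k] (1 : H)) =
      ∑ j ∈ ry.index, Δ (x * ry.left j) * ((1 : H) ⊗ₜ[k] S (ry.right j)) := by
    rw [← sum_comul_mul_one_tmul_antipode ry, Finset.mul_sum]
    simp_rw [Bialgebra.comul_mul, mul_assoc]
  have hkey := congrArg T key
  rw [← rx.eq, Finset.sum_mul, map_sum, map_sum] at hkey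
  simp only [Algebra.TensorProduct.tmul_mul_tmul, mul_one, hT, hT_mul] at hkey
  rw [hkey]
  refine Finset.sum_congr rfl fun j _ => ?_
  rw [show T (Δ (x * ry.left j)) = _ from ht.lid_rTensor_comul _, smul_mul_assoc, one_mul]

lemma IsLeftIntegral.sum_apply_mul_integral_smul (ht : IsLeftIntegral t)
    (hΛ : ∀ h : H, h * Λ = ε h • Λ) (x : H) (r : Repr k Λ ι) :
    ∑ j ∈ r.index, t (x * r.right j) • r.left j = t Λ • S x := by
  rw [ht.sum_smul_eq_sum_smul_antipode (ℛ k x) r]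
  conv_rhs => rw [← sum_counit_smul_left (ℛ k x), map_sum, Finset.smul_sum]
  refine Finset.sum_congr rfl fun i _ => ?_
  rw [hΛ, map_smul, smul_eq_mul, map_smul, smul_smul, mul_comm]

lemma IsRightIntegral.sum_apply_integral_mul_smul (ht : IsRightIntegral t)
    (hΛ : ∀ h : H, Λ * h = ε h • Λ) (y : H) (r : Repr k Λ ι) :
    ∑ i ∈ r.index, t (r.left i * y) • r.right i = t Λ • S y := by
  rw [ht.sum_smul_eq_sum_smul_antipode r (ℛ k y)]
  conv_rhs => rw [← sum_counit_smul (ℛ k y), map_sum, Finset.smul_sum]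
  refine Finset.sum_congr rfl fun j _ => ?_
  rw [hΛ, map_smul, smul_eq_mul, map_smul, smul_smul, mul_comm]

lemma apply_antipode_mul_eq_apply_mul_antipode (hA : IsLeftIntegral t) (hB : IsRightIntegral t)
    (hΛl : ∀ h : H, h * Λ = ε h • Λ) (hΛr : ∀ h : H, Λ * h = ε h • Λ) (hΛ : t Λ ≠ 0)
    (x y : H) : t (S x * y) = t (x * S y) := by
  have h₁ := congrArg (t ∘ₗ LinearMap.mulRight k y)
    (hA.sum_apply_mul_integral_smul hΛl x (ℛ k Λ))
  have h₂ := congrArg (t ∘ₗ LinearMap.mulLeft k x)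
    (hB.sum_apply_integral_mul_smul hΛr y (ℛ k Λ))
  simp only [map_sum, map_smul, LinearMap.comp_apply, LinearMap.mulRight_apply,
    LinearMap.mulLeft_apply, smul_eq_mul] at h₁ h₂
  refine mul_left_cancel₀ hΛ (h₁.symm.trans (Eq.trans ?_ h₂))
  exact Finset.sum_congr rfl fun i _ => mul_comm _ _

lemma apply_mul_comm (hA : IsLeftIntegral t) (hB : IsRightIntegral t) (hS : ∀ x : H, S (S x) = x)
    (hΛl : ∀ h : H, h * Λ = ε h • Λ) (hΛr : ∀ h : H, Λ * h = ε h • Λ) (hΛ : t Λ ≠ 0)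
    (x y : H) : t (x * y) = t (y * x) := by
  have hSt : ∀ z : H, t (S z) = t z := fun z => by
    simpa using apply_antipode_mul_eq_apply_mul_antipode hA hB hΛl hΛr hΛ z 1
  calc t (x * y) = t (S y * S x) := by rw [← antipode_mul_antidistrib, hSt]
    _ = t (y * S (S x)) := apply_antipode_mul_eq_apply_mul_antipode hA hB hΛl hΛr hΛ y (S x)
    _ = t (y * x) := by rw [hS]

lemma apply_mul_finrank_eq_apply_one [FiniteDimensional k H] (hB : IsRightIntegral t)
    (hS : ∀ x : H, S (S x) = x) (hΛr : ∀ h : H, Λ * h = ε h • Λ) (hΛε : ε Λ = 1) :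
    t Λ * Module.finrank k H = t 1 := by
  let r := ℛ k Λ
  have hid : ∑ i ∈ r.index,
      dualTensorHom k H H ((t ∘ₗ LinearMap.mulLeft k (r.left i)) ⊗ₜ S (r.right i)) =
        t Λ • LinearMap.id := by
    ext y
    have h := congrArg S (hB.sum_apply_integral_mul_smul hΛr y r)
    simp only [map_sum, map_smul, hS] at h
    simpa [LinearMap.sum_apply, dualTensorHom_apply] using h
  have htrace := congrArg (LinearMap.trace k H) hid
  simp only [map_sum, LinearMap.trace_eq_contract_apply, contractLeft_apply, LinearMap.comp_apply,
    LinearMap.mulLeft_apply, map_smul, LinearMap.trace_id, smul_eq_mul] at htrace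
  rw [← htrace, ← map_sum, sum_mul_antipode_eq_smul, hΛε, one_smul]

/-- A left ideal complementing `ker ε` is spanned by a left integral. -/
lemma exists_left_integral_counit_eq_one [IsSemisimpleRing H] :
    ∃ Λ : H, ε Λ = 1 ∧ ∀ h : H, h * Λ = ε h • Λ := by
  let I : Ideal H := RingHom.ker (Bialgebra.counitAlgHom k H : H →+* k)
  obtain ⟨J, hIJ⟩ := exists_isCompl I
  obtain ⟨u, hu, Λ, hΛ, hsum⟩ :=
    Submodule.mem_sup.mp (hIJ.sup_eq_top ▸ Submodule.mem_top : (1 : H) ∈ I ⊔ J)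
  have hεΛ : ε Λ = 1 := by
    have := congrArg ε hsum
    rwa [map_add, show ε u = 0 from hu, zero_add, Bialgebra.counit_one] at this
  refine ⟨Λ, hεΛ, fun h => sub_eq_zero.mp <| Submodule.disjoint_def.mp hIJ.disjoint _ ?_ ?_⟩
  · change ε (h * Λ - ε h • Λ) = 0
    rw [map_sub, Bialgebra.counit_mul, map_smul, hεΛ, smul_eq_mul, mul_one, sub_self]
  · rw [Algebra.smul_def]
    exact J.sub_mem (J.smul_mem h hΛ) (J.smul_mem _ hΛ)

lemma exists_integral_counit_eq_one [IsSemisimpleRing H] (hS : ∀ x : H, S (S x) = x) :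
    ∃ Λ : H, ε Λ = 1 ∧ (∀ h : H, h * Λ = ε h • Λ) ∧ ∀ h : H, Λ * h = ε h • Λ := by
  obtain ⟨Λ, hεΛ, hΛ⟩ := exists_left_integral_counit_eq_one (k := k) (H := H)
  have hSΛ : ∀ h : H, S Λ * h = ε h • S Λ := fun h => by
    rw [← hS h, ← antipode_mul_antidistrib, hΛ, map_smul, counit_antipode, hS]
  refine ⟨Λ * S Λ, ?_, fun h => ?_, fun h => ?_⟩
  · rw [Bialgebra.counit_mul, counit_antipode, hεΛ, mul_one]
  · rw [← mul_assoc, hΛ, smul_mul_assoc]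
  · rw [mul_assoc, hSΛ, mul_smul_comm]

lemma fourier_apply (t : Module.Dual k H) (a x : H) : fourier k H t a x = t (x * a) := rfl

lemma adAct_eq_sum (a h : H) (r : Repr k a ι) :
    adAct k H a h = ∑ i ∈ r.index, r.left i * (h * S (r.right i)) := by
  rw [adAct, LinearMap.comp_apply, LinearMap.comp_apply, ← r.eq, map_sum, map_sum,
    LinearMap.sum_apply]
  rfl

lemma coadAct_apply_eq (a : H) (f : Module.Dual k H) (x : H) (r : Repr k a ι) :
    coadAct k H a f x = f (∑ i ∈ r.index, S (r.right i) * (x * r.left i)) := by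
  rw [coadAct, LinearMap.comp_apply, ← r.eq, map_sum, map_sum, map_sum, LinearMap.sum_apply]
  rfl

lemma dualAct_eq_sum (f : Module.Dual k H) (h : H) (r : Repr k h ι) :
    dualAct k H f h = ∑ i ∈ r.index, f (S (r.left i)) • r.right i := by
  rw [dualAct, LinearMap.comp_apply, LinearMap.comp_apply, ← r.eq, map_sum, map_sum]
  rfl

lemma fourier_injective (ht : IsRightIntegral t) (hS : ∀ x : H, S (S x) = x)
    (hΛr : ∀ h : H, Λ * h = ε h • Λ) (hΛ : t Λ ≠ 0) : Function.Injective (fourier k H t) := by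
  refine (injective_iff_map_eq_zero _).mpr fun w hw => ?_
  have h := ht.sum_apply_integral_mul_smul hΛr w (ℛ k Λ)
  simp only [← fourier_apply, hw, LinearMap.zero_apply, zero_smul, Finset.sum_const_zero] at h
  rw [← hS w, (smul_eq_zero.mp h.symm).resolve_left hΛ, map_zero]

lemma fourier_bijective [FiniteDimensional k H] (ht : IsRightIntegral t)
    (hS : ∀ x : H, S (S x) = x) (hΛr : ∀ h : H, Λ * h = ε h • Λ) (hΛ : t Λ ≠ 0) :
    Function.Bijective (fourier k H t) := by
  have hinj := fourier_injective ht hS hΛr hΛ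
  exact ⟨hinj, (LinearMap.injective_iff_surjective_of_finrank_eq_finrank
    Subspace.dual_finrank_eq.symm).mp hinj⟩

lemma fourier_adAct (htr : ∀ x y : H, t (x * y) = t (y * x)) (a h : H) :
    fourier k H t (adAct k H a h) = coadAct k H a (fourier k H t h) := by
  ext x
  rw [fourier_apply, coadAct_apply_eq a _ x (ℛ k a), adAct_eq_sum a h (ℛ k a), fourier_apply,
    Finset.mul_sum, Finset.sum_mul, map_sum, map_sum]
  refine Finset.sum_congr rfl fun i _ => ?_
  simpa only [mul_assoc] using htr (x * (ℛ k a).left i * h) (S ((ℛ k a).right i))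

lemma fourier_dualAct (ht : IsLeftIntegral t) (hS : ∀ x : H, S (S x) = x)
    (f : Module.Dual k H) (h : H) :
    fourier k H t (dualAct k H f h) = conv k H f (fourier k H t h) := by
  ext x
  have key := congrArg (f ∘ₗ S) (ht.sum_smul_eq_sum_smul_antipode (ℛ k x) (ℛ k h))
  simp only [map_sum, map_smul, LinearMap.comp_apply, hS, smul_eq_mul] at key
  rw [fourier_apply, dualAct_eq_sum f h (ℛ k h), conv_apply_eq_sum f _ (ℛ k x), Finset.mul_sum,
    map_sum]
  simp only [mul_smul_comm, map_smul, smul_eq_mul, fourier_apply]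
  simpa only [mul_comm] using key

end Integrals

theorem fourier_is_DH_module_iso_general
    (k : Type) [Field k]
    (H : Type) [Ring H] [HopfAlgebra k H] [FiniteDimensional k H] [IsSemisimpleRing H]
    (hS : ∀ x : H, HopfAlgebra.antipode (R := k) (HopfAlgebra.antipode (R := k) x) = x)
    (tH : Module.Dual k H)
    (htH : ∀ f : Module.Dual k H, conv k H f tH = f 1 • tH ∧ conv k H tH f = f 1 • tH)
    (htH1 : tH 1 = 1)
    :
    Function.Bijective (fourier k H tH) ∧
    (∀ (a h : H), fourier k H tH (adAct k H a h) = coadAct k H a (fourier k H tH h)) ∧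
    (∀ (f : Module.Dual k H) (h : H),
      fourier k H tH (dualAct k H f h) = conv k H f (fourier k H tH h)) := by
  have hA : IsLeftIntegral tH := fun f => (htH f).1
  have hB : IsRightIntegral tH := fun f => (htH f).2
  obtain ⟨Λ, hεΛ, hΛl, hΛr⟩ := exists_integral_counit_eq_one hS
  have hΛ : tH Λ ≠ 0 := left_ne_zero_of_mul_eq_one <|
    (apply_mul_finrank_eq_apply_one hB hS hΛr hεΛ).trans htH1
  exact ⟨fourier_bijective hB hS hΛr hΛ,
    fourier_adAct (apply_mul_comm hA hB hS hΛl hΛr hΛ),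
    fourier_dualAct hA hS⟩

/-- the Fourier transform `F : H → H*` is an isomorphism of `D(H)`-modules,
i.e. it is bijective and intertwines the two actions of `H` (the adjoint action on `H` and
the coadjoint action on `H*`) and the two actions of `H*` (the action `f·h = ∑ f(S h₁) h₂`
on `H` and left convolution-multiplication on `H*`), which together generate the Drinfeld
double `D(H)`.  (Here `S⁻¹ = S` since `S² = id` for semisimple Hopf algebras.) -/
theorem fourier_is_DH_module_iso
    (k : Type) [Field k] [IsAlgClosed k] [CharZero k]
    (H : Type) [Ring H] [HopfAlgebra k H] [FiniteDimensional k H] [IsSemisimpleRing H]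
    (hS : ∀ x : H, HopfAlgebra.antipode (R := k) (HopfAlgebra.antipode (R := k) x) = x)
    (tH : Module.Dual k H)
    (htH : ∀ f : Module.Dual k H, conv k H f tH = f 1 • tH ∧ conv k H tH f = f 1 • tH)
    (htH1 : tH 1 = 1)
    :
    Function.Bijective (fourier k H tH) ∧
    (∀ (a h : H), fourier k H tH (adAct k H a h) = coadAct k H a (fourier k H tH h)) ∧
    (∀ (f : Module.Dual k H) (h : H),
      fourier k H tH (dualAct k H f h) = conv k H f (fourier k H tH h)) :=
  fourier_is_DH_module_iso_general k H hS tH htH htH1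

end Paper
end
end
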